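/- arXiv:math/0001041 — 6 statements merged into one kernel-verified Lean document; each statement's English description precedes it below -/
import Mathlib

section
/- Let Ω be a nondegenerate 2-form with values in a line bundle on a manifold of even dimension n = 2m > 2, and fix any Weyl derivative D⁰. If D = D⁰ + γ for a 1-form γ, then the Ω-traces of d^D Ω and d^{D⁰} Ω differ by 2(n−2)γ; hence there is a unique Weyl derivative D such that d^D Ω is trace-free with respect to Ω. -/
/-!
Contracting `γ ∧ Ω` against an `Ω`-dual frame: in the two terms where `γ` eats a frame vector,
completeness of the frame and skew-symmetry of `Ω` give `-γ` each, while the term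
`γ x * Ω (eᵢ, eᵢ')` gives `n γ`. So the trace shifts by `2 (n - 2) γ`, and since `n ≠ 2` the
affine map `γ ↦ tr (d^{D⁰} Ω) + 2 (n - 2) γ` has exactly one zero.
-/

open Finset

section OmegaTrace

variable {ι V : Type*} [Fintype ι] [AddCommGroup V] [Module ℝ V]
  {Ω : V →ₗ[ℝ] V →ₗ[ℝ] ℝ} {e e' : ι → V}

theorem sum_apply_mul_eq_of_sum_smul_eq {c : ι → ℝ} {v : ι → V} {x : V}
    (hx : ∑ i, c i • v i = x) (δ : V →ₗ[ℝ] ℝ) : ∑ i, δ (v i) * c i = δ x := by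
  simp [← hx, map_sum, mul_comm]

theorem sum_apply_frame_mul_eq_neg (hΩalt : ∀ x y, Ω x y = - Ω y x)
    (hcomp : ∀ x : V, ∑ i, Ω x (e' i) • e i = x) (δ : V →ₗ[ℝ] ℝ) (x : V) :
    ∑ i, δ (e i) * Ω (e' i) x = - δ x := by
  rw [← sum_apply_mul_eq_of_sum_smul_eq (hcomp x) δ, ← sum_neg_distrib]
  exact sum_congr rfl fun i _ => by rw [hΩalt (e' i) x, mul_neg]

theorem sum_apply_dualFrame_mul_eq_neg (hΩalt : ∀ x y, Ω x y = - Ω y x)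
    (hcomp' : ∀ x : V, ∑ i, Ω (e i) x • e' i = x) (δ : V →ₗ[ℝ] ℝ) (x : V) :
    ∑ i, δ (e' i) * Ω x (e i) = - δ x := by
  rw [← sum_apply_mul_eq_of_sum_smul_eq (hcomp' x) δ, ← sum_neg_distrib]
  exact sum_congr rfl fun i _ => by rw [hΩalt x (e i), mul_neg]

/-- The `Ω`-trace of `δ ∧ Ω`, up to the normalisation of the wedge product. -/
theorem sum_wedge_frame_eq (hΩalt : ∀ x y, Ω x y = - Ω y x)
    (hdiag : ∀ i, Ω (e i) (e' i) = 1)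
    (hcomp : ∀ x : V, ∑ i, Ω x (e' i) • e i = x)
    (hcomp' : ∀ x : V, ∑ i, Ω (e i) x • e' i = x) (δ : V →ₗ[ℝ] ℝ) (x : V) :
    ∑ i, (δ (e i) * Ω (e' i) x + δ (e' i) * Ω x (e i) + δ x * Ω (e i) (e' i))
      = ((Fintype.card ι : ℝ) - 2) * δ x := by
  rw [sum_add_distrib, sum_add_distrib, sum_apply_frame_mul_eq_neg hΩalt hcomp,
    sum_apply_dualFrame_mul_eq_neg hΩalt hcomp', ← mul_sum]
  simp only [hdiag, sum_const, card_univ, nsmul_eq_mul, mul_one]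
  ring

theorem sum_add_two_wedge_frame_eq (hΩalt : ∀ x y, Ω x y = - Ω y x)
    (hdiag : ∀ i, Ω (e i) (e' i) = 1)
    (hcomp : ∀ x : V, ∑ i, Ω x (e' i) • e i = x)
    (hcomp' : ∀ x : V, ∑ i, Ω (e i) x • e' i = x)
    (T₀ : V → V → V → ℝ) (δ : V →ₗ[ℝ] ℝ) (x : V) :
    ∑ i, (T₀ (e i) (e' i) x
        + 2 * (δ (e i) * Ω (e' i) x + δ (e' i) * Ω x (e i) + δ x * Ω (e i) (e' i)))
      = (∑ i, T₀ (e i) (e' i) x) + 2 * ((Fintype.card ι : ℝ) - 2) * δ x := by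
  rw [sum_add_distrib, ← mul_sum, sum_wedge_frame_eq hΩalt hdiag hcomp hcomp']
  ring

end OmegaTrace

theorem LinearMap.existsUnique_add_mul_eq_zero {V : Type*} [AddCommGroup V] [Module ℝ V]
    (f : V →ₗ[ℝ] ℝ) {c : ℝ} (hc : c ≠ 0) :
    ∃! δ : V →ₗ[ℝ] ℝ, ∀ x, f x + c * δ x = 0 := by
  refine ⟨-c⁻¹ • f, fun x => by simp [hc], fun δ hδ => LinearMap.ext fun x => ?_⟩
  rw [LinearMap.smul_apply, smul_eq_mul, eq_comm, neg_mul, neg_eq_iff_eq_neg,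
    inv_mul_eq_iff_eq_mul₀ hc]
  linear_combination hδ x

theorem unique_weyl_derivative_tracefree_general
    (n : ℕ) (h2 : 2 < n)
    (V : Type*) [AddCommGroup V] [Module ℝ V]
    (Ω : V →ₗ[ℝ] V →ₗ[ℝ] ℝ)
    (hΩalt : ∀ x y, Ω x y = - Ω y x)
    (e e' : Fin n → V)
    (hframe : ∀ i j, Ω (e i) (e' j) = if i = j then 1 else 0)
    (hcomp : ∀ x : V, ∑ i, Ω x (e' i) • e i = x)
    (hcomp' : ∀ x : V, ∑ i, Ω (e i) x • e' i = x)
    (γ : V →ₗ[ℝ] ℝ)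
    (T T₀ : V → V → V → ℝ)     -- d^D Ω and d^{D⁰} Ω
    (hT : ∀ a b c, T a b c
      = T₀ a b c + 2 * (γ a * Ω b c + γ b * Ω c a + γ c * Ω a b))
    (hT₀lin : IsLinearMap ℝ (fun x => ∑ i, T₀ (e i) (e' i) x)) :
    (∀ x, ∑ i, T (e i) (e' i) x
        = (∑ i, T₀ (e i) (e' i) x) + 2 * ((n : ℝ) - 2) * γ x) ∧
    (∃! δ : V →ₗ[ℝ] ℝ, ∀ x,
      (∑ i, (T₀ (e i) (e' i) x
        + 2 * (δ (e i) * Ω (e' i) x + δ (e' i) * Ω x (e i) + δ x * Ω (e i) (e' i)))) = 0) := by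
  have hdiag : ∀ i, Ω (e i) (e' i) = 1 := fun i => by simp [hframe]
  have htrace := sum_add_two_wedge_frame_eq hΩalt hdiag hcomp hcomp' T₀
  simp only [Fintype.card_fin] at htrace
  refine ⟨fun x => by simpa only [hT] using htrace γ x, ?_⟩
  have hc : 2 * ((n : ℝ) - 2) ≠ 0 := by
    have : (2 : ℝ) < n := by exact_mod_cast h2
    positivity
  simpa only [htrace, IsLinearMap.mk'_apply] using
    (IsLinearMap.mk' _ hT₀lin).existsUnique_add_mul_eq_zero hc

/-- pointwise/framewise model: let `Ω` be a nondegenerate (weightless) `2`-form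
on an `n`-manifold, `n = 2m > 2`, with an `Ω`-dual frame `e, e'` (so `Ω(eᵢ, eⱼ') = δᵢⱼ`,
together with the completeness relations expressing nondegeneracy).  The `Ω`-trace of a
`3`-form `α` is `x ↦ ∑ᵢ α(eᵢ, eᵢ', x)`.  If `D = D⁰ + γ`, so that
`d^D Ω = d^{D⁰} Ω + 2 γ ∧ Ω`, then the `Ω`-traces of `d^D Ω` and `d^{D⁰} Ω` differ by
`2(n-2)γ`; hence there is a unique `1`-form `γ` (i.e. a unique Weyl derivative `D = D⁰ + γ`)
for which `d^D Ω` is trace-free with respect to `Ω`. -/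
theorem unique_weyl_derivative_tracefree
    (n m : ℕ) (hm : n = 2 * m) (h2 : 2 < n)
    (V : Type*) [AddCommGroup V] [Module ℝ V] [FiniteDimensional ℝ V]
    (hdim : Module.finrank ℝ V = n)
    (Ω : V →ₗ[ℝ] V →ₗ[ℝ] ℝ)
    (hΩalt : ∀ x y, Ω x y = - Ω y x)
    (e e' : Fin n → V)
    (hframe : ∀ i j, Ω (e i) (e' j) = if i = j then 1 else 0)
    (hcomp : ∀ x : V, ∑ i, Ω x (e' i) • e i = x)
    (hcomp' : ∀ x : V, ∑ i, Ω (e i) x • e' i = x)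
    (γ : V →ₗ[ℝ] ℝ)
    (T T₀ : V → V → V → ℝ)     -- d^D Ω and d^{D⁰} Ω
    (hT : ∀ a b c, T a b c
      = T₀ a b c + 2 * (γ a * Ω b c + γ b * Ω c a + γ c * Ω a b))
    (hT₀lin : IsLinearMap ℝ (fun x => ∑ i, T₀ (e i) (e' i) x)) :
    (∀ x, ∑ i, T (e i) (e' i) x
        = (∑ i, T₀ (e i) (e' i) x) + 2 * ((n : ℝ) - 2) * γ x) ∧
    (∃! δ : V →ₗ[ℝ] ℝ, ∀ x,
      (∑ i, (T₀ (e i) (e' i) x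
        + 2 * (δ (e i) * Ω (e' i) x + δ (e' i) * Ω x (e i) + δ x * Ω (e i) (e' i)))) = 0) :=
  unique_weyl_derivative_tracefree_general n h2 V Ω hΩalt e e' hframe hcomp hcomp' γ T T₀ hT hT₀lin
end

section
/- The Weyl-Lie derivative fails to commute with exterior differentiation exactly by the Faraday curvature: (L^D_ξ d)α := L^D_ξ(dα) − d^D(L^D_ξ α) = F^D ∧ ι_ξ α for any differential form α, where F^D is the curvature 2-form of D; in particular L^D_ξ commutes with d on functions. -/
/-!
Writing `d^D = d - ω ∧ ·`, the Leibniz rule for the 1-form `ω` and `d² = 0` give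
`(d^D)² = -(dω - ω ∧ ω) ∧ ·`, i.e. the square of the twisted differential is minus the curvature.
Since `L^D_ξ (dα) = d^D(ι_ξ dα)` and `d^D (L^D_ξ α) = d^D(ι_ξ dα) + (d^D)² (ι_ξ α)`, the commutator
is `-(d^D)²(ι_ξ α) = F^D ∧ ι_ξ α`, as `ω ∧ ω = 0`.
-/

namespace WeylLie

variable {R : Type*} [Ring R] (d ι : R →+ R) (ω : R)

def twistedDeriv : R →+ R := d - AddMonoidHom.mulLeft ω

theorem twistedDeriv_apply (β : R) : twistedDeriv d ω β = d β - ω * β := rfl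

def weylLieDeriv (α : R) : R := ι (d α) + twistedDeriv d ω (ι α)

variable {d ω}

theorem twistedDeriv_twistedDeriv (hdd : ∀ α, d (d α) = 0)
    (hleib : ∀ α, d (ω * α) = d ω * α - ω * d α) (β : R) :
    twistedDeriv d ω (twistedDeriv d ω β) = -((d ω - ω * ω) * β) := by
  simp only [twistedDeriv_apply, map_sub, hdd, hleib, sub_mul, mul_assoc]
  abel

theorem weylLieDeriv_deriv_sub (hdd : ∀ α, d (d α) = 0)
    (hleib : ∀ α, d (ω * α) = d ω * α - ω * d α) (α : R) :
    weylLieDeriv d ι ω (d α) - twistedDeriv d ω (weylLieDeriv d ι ω α) =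
      (d ω - ω * ω) * ι α := by
  have hdα : weylLieDeriv d ι ω (d α) = twistedDeriv d ω (ι (d α)) := by
    rw [weylLieDeriv, hdd, map_zero, zero_add]
  rw [hdα, weylLieDeriv, map_add, twistedDeriv_twistedDeriv hdd hleib, sub_add_cancel_left,
    neg_neg]

end WeylLie

open WeylLie in
/-- model in the full exterior algebra of forms, trivializing `𝒱`: the
Weyl-Lie derivative fails to commute with exterior differentiation exactly by the Faraday
curvature: `(L^D_ξ d)α := L^D_ξ(dα) - d^D(L^D_ξ α) = F^D ∧ ι_ξ α` for any form `α`, where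
`F^D = dω` is the curvature of `D`; in particular `L^D_ξ` commutes with `d` on functions
(forms with `ι_ξ α = 0`).  Here `L^D_ξ` on forms is given by the Cartan-type formula
`L^D_ξ α = ι_ξ dα + d^D(ι_ξ α)` and `d^D β = dβ - ω ∧ β`. -/
theorem weyl_lie_commutator_with_d
    (Λ : Type*) [Ring Λ] [Algebra ℝ Λ]
    (d : Λ →ₗ[ℝ] Λ)          -- exterior derivative
    (ι : Λ →ₗ[ℝ] Λ)          -- interior product with ξ
    (ω : Λ)                   -- connection 1-form of D in the trivialization
    (hdd : ∀ α : Λ, d (d α) = 0)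
    (hleib : ∀ α : Λ, d (ω * α) = d ω * α - ω * d α)   -- ω is a 1-form
    (hωω : ∀ α : Λ, ω * (ω * α) = 0)
    (F : Λ) (hF : F = d ω)                             -- Faraday curvature
    (dD : Λ → Λ) (hdD : ∀ β : Λ, dD β = d β - ω * β)
    (LD : Λ → Λ) (hLD : ∀ α : Λ, LD α = ι (d α) + dD (ι α)) :
    (∀ α : Λ, LD (d α) - dD (LD α) = F * ι α) ∧
    (∀ α : Λ, ι α = 0 → LD (d α) = dD (LD α)) := by
  have hdD' : dD = twistedDeriv d.toAddMonoidHom ω := funext hdD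
  have hLD' : LD = weylLieDeriv d.toAddMonoidHom ι.toAddMonoidHom ω := by
    funext α
    rw [hLD, hdD']
    rfl
  have commutator (α : Λ) : LD (d α) - dD (LD α) = F * ι α := by
    rw [hLD', hdD']
    refine (weylLieDeriv_deriv_sub (d := d.toAddMonoidHom) ι.toAddMonoidHom hdd hleib α).trans ?_
    rw [sub_mul, mul_assoc, hωω, sub_zero, hF]
    rfl
  refine ⟨commutator, fun α hια => ?_⟩
  rw [← sub_eq_zero, commutator, hια, mul_zero]
end

section
/- The Weyl-Lie derivative of the Lie bracket along a congruence ξ with Weyl derivative D is L^D_ξ[·,·](X,Y) = −F^D(X,Y) ξ for all vector fields X, Y. -/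
/-!
Expanding `L^D_ξ Y = [ξ, Y] + ω(Y) ξ` in both twisted brackets, the terms `ω(X) [ξ, Y]`,
`ω(Y) [ξ, X]` and `ω(X) ω(Y) ξ` cancel in pairs, and by the Jacobi identity the iterated brackets
add up to `[ξ, [X, Y]]`. What survives is `(X·ω(Y) - Y·ω(X)) ξ`, the derivative part of the
Faraday curvature; subtracting it from `L^D_ξ [X, Y] = [ξ, [X, Y]] + ω([X, Y]) ξ` leaves `-F^D(X, Y) ξ`.
-/

section WeylLie

variable {A X : Type*} [LieRing X]

theorem smul_lie_of_lie_smul [Ring A] [Module A X] (act : X → A → A)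
    (hmod : ∀ (x y : X) (f : A), ⁅x, f • y⁆ = f • ⁅x, y⁆ + act x f • y) (f : A) (x y : X) :
    ⁅f • x, y⁆ = f • ⁅x, y⁆ - act y f • x := by
  rw [← lie_skew, hmod, neg_add, ← lie_skew, smul_neg, neg_neg, sub_eq_add_neg]

variable [CommRing A] [Module A X] (ω : X → A) (ξ : X)

/-- The Weyl-Lie derivative `L^D_ξ`, in a trivialization of `𝒱`. -/
def weylLieDeriv (y : X) : X :=
  ⁅ξ, y⁆ + ω y • ξ

theorem weylLieDeriv_lie_add_smul (act : X → A → A)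
    (hmod : ∀ (x y : X) (f : A), ⁅x, f • y⁆ = f • ⁅x, y⁆ + act x f • y) (x y : X) :
    ⁅weylLieDeriv ω ξ x, y⁆ + ω y • weylLieDeriv ω ξ x
      = ⁅⁅ξ, x⁆, y⁆ + ω y • ⁅ξ, x⁆ + ω x • ⁅ξ, y⁆ + (ω x * ω y - act y (ω x)) • ξ := by
  simp only [weylLieDeriv, add_lie, smul_lie_of_lie_smul act hmod, smul_add, smul_smul]
  module

theorem lie_weylLieDeriv_sub_smul (act : X → A → A)
    (hmod : ∀ (x y : X) (f : A), ⁅x, f • y⁆ = f • ⁅x, y⁆ + act x f • y) (x y : X) :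
    ⁅x, weylLieDeriv ω ξ y⁆ - ω x • weylLieDeriv ω ξ y
      = ⁅x, ⁅ξ, y⁆⁆ - ω y • ⁅ξ, x⁆ - ω x • ⁅ξ, y⁆ + (act x (ω y) - ω x * ω y) • ξ := by
  simp only [weylLieDeriv, lie_add, hmod, smul_add, smul_smul, ← lie_skew ξ x]
  module

theorem weylLieDeriv_twisted_lie_add (act : X → A → A)
    (hmod : ∀ (x y : X) (f : A), ⁅x, f • y⁆ = f • ⁅x, y⁆ + act x f • y) (x y : X) :
    (⁅weylLieDeriv ω ξ x, y⁆ + ω y • weylLieDeriv ω ξ x)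
        + (⁅x, weylLieDeriv ω ξ y⁆ - ω x • weylLieDeriv ω ξ y)
      = ⁅ξ, ⁅x, y⁆⁆ + (act x (ω y) - act y (ω x)) • ξ := by
  rw [weylLieDeriv_lie_add_smul ω ξ act hmod, lie_weylLieDeriv_sub_smul ω ξ act hmod, leibniz_lie ξ x y]
  module

end WeylLie

/-- Model in a trivialization of `𝒱`: `A` is the function ring, `X` the vector fields acting on
`A` through `act`, `ω` the connection form of `D`, and the twisted brackets of a `𝒱⁻¹`-valued
field `v` with `Y` for the tensor-sum connection are `[v, Y]_D = [v, Y] + ω(Y) v` and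
`[Y, v]_D = [Y, v] - ω(Y) v`. -/
theorem weyl_lie_of_bracket
    (A : Type*) [CommRing A]
    (X : Type*) [LieRing X] [Module A X]
    (act : X → A → A)
    (hmod : ∀ (x y : X) (f : A), ⁅x, f • y⁆ = f • ⁅x, y⁆ + act x f • y)
    (ω : X →ₗ[A] A)
    (ξ : X)
    (F : X → X → A)
    (hF : ∀ x y, F x y = act x (ω y) - act y (ω x) - ω ⁅x, y⁆)
    (LD : X → X)
    (hLD : ∀ y, LD y = ⁅ξ, y⁆ + ω y • ξ) :
    ∀ x y : X,
      LD ⁅x, y⁆ - (⁅LD x, y⁆ + ω y • LD x) - (⁅x, LD y⁆ - ω x • LD y)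
        = - F x y • ξ := by
  intro x y
  obtain rfl : LD = weylLieDeriv ω ξ := funext hLD
  rw [sub_sub, weylLieDeriv_twisted_lie_add ω ξ act hmod, hF, weylLieDeriv]
  module
end

section
/- If (w, A) with w = t w₁ + w₀ and A = t A₁ + A₀ (w₀, w₁ time-independent densities, A₀, A₁ time-independent 1-forms on B), then the generalized monopole equation *_B(D^B w + Ȧ w − A ẇ) = dA + Ȧ ∧ A holds for all t if and only if the two affine monopole equations *_B D^B w₁ = dA₁ and *_B(D^B w₀ + A₁ w₀ − A₀ w₁) = dA₀ + A₁ ∧ A₀ hold, since D^B w + Ȧw − Aẇ = t D^B w₁ + (D^B w₀ + w₀A₁ − w₁A₀) and dA + Ȧ∧A = t dA₁ + (dA₀ + A₁∧A₀). -/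
/-! Under the affine ansatz both sides of the monopole equation are affine in `t`: the quadratic
terms `t² A₁ w₁` cancel between `Ȧ w` and `A ẇ`, and `t² A₁ ∧ A₁` vanishes since the wedge is
alternating. An affine identity holds for all `t` iff it holds at `t = 0` and `t = 1`, i.e. iff
the coefficients agree. -/

theorem forall_smul_add_eq_smul_add_iff {R M : Type*} [Semiring R] [AddCommMonoid M] [Module R M]
    [IsRightCancelAdd M] {a b c e : M} :
    (∀ t : R, t • a + b = t • c + e) ↔ a = c ∧ b = e := by
  refine ⟨fun h => ?_, fun ⟨hac, hbe⟩ t => by rw [hac, hbe]⟩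
  have hbe : b = e := by simpa using h 0
  have hac : a + b = c + e := by simpa using h 1
  exact ⟨add_right_cancel (hbe ▸ hac), hbe⟩

section AffineAnsatz

variable {R W Ω1 Ω2 : Type*} [CommRing R] [AddCommGroup W] [Module R W]
  [AddCommGroup Ω1] [Module R Ω1] [AddCommGroup Ω2] [Module R Ω2]

theorem monopole_lhs_affine_expand (star : Ω1 →ₗ[R] Ω2) (DB : W →ₗ[R] Ω1)
    (smul : Ω1 →ₗ[R] W →ₗ[R] Ω1) (t : R) (w0 w1 : W) (A0 A1 : Ω1) :
    star (DB (t • w1 + w0) + smul A1 (t • w1 + w0) - smul (t • A1 + A0) w1)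
      = t • star (DB w1) + star (DB w0 + smul A1 w0 - smul A0 w1) := by
  simp only [map_add, map_smul, map_sub, LinearMap.add_apply, LinearMap.smul_apply]
  module

theorem monopole_rhs_affine_expand (d : Ω1 →ₗ[R] Ω2) (wedge : Ω1 →ₗ[R] Ω1 →ₗ[R] Ω2)
    {A1 : Ω1} (hA1 : wedge A1 A1 = 0) (t : R) (A0 : Ω1) :
    d (t • A1 + A0) + wedge A1 (t • A1 + A0) = t • d A1 + (d A0 + wedge A1 A0) := by
  simp only [map_add, map_smul, hA1, smul_zero, zero_add]
  abel

end AffineAnsatz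

/-- Theorem IV of the paper, abstract model of the monopole equations on a
3-dimensional Einstein-Weyl space `B`: let `W` model the densities of weight `-1` on `B`,
`Ω1` and `Ω2` the (density-valued) `1`- and `2`-forms, `star` the Hodge star `*_B`, `DB`
the Einstein-Weyl derivative, `d` the exterior derivative, `smul` the product of a `1`-form
with a density, and `wedge` the (alternating) wedge product of `1`-forms.  For the affine
ansatz `w = t w₁ + w₀`, `A = t A₁ + A₀` (coefficients time-independent), the generalized
monopole equation `*_B(D^B w + Ȧ w - A ẇ) = dA + Ȧ ∧ A` holds for all `t` if and only if
the two affine monopole equations `*_B D^B w₁ = dA₁` and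
`*_B(D^B w₀ + A₁ w₀ - A₀ w₁) = dA₀ + A₁ ∧ A₀` hold. -/
theorem affine_monopole_equations
    (W Ω1 Ω2 : Type*) [AddCommGroup W] [Module ℝ W]
    [AddCommGroup Ω1] [Module ℝ Ω1] [AddCommGroup Ω2] [Module ℝ Ω2]
    (star : Ω1 →ₗ[ℝ] Ω2)
    (DB : W →ₗ[ℝ] Ω1)
    (d : Ω1 →ₗ[ℝ] Ω2)
    (smul : Ω1 →ₗ[ℝ] W →ₗ[ℝ] Ω1)
    (wedge : Ω1 →ₗ[ℝ] Ω1 →ₗ[ℝ] Ω2)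
    (halt : ∀ a : Ω1, wedge a a = 0)
    (w0 w1 : W) (A0 A1 : Ω1) :
    (∀ t : ℝ,
      star (DB (t • w1 + w0) + smul A1 (t • w1 + w0) - smul (t • A1 + A0) w1)
        = d (t • A1 + A0) + wedge A1 (t • A1 + A0))
    ↔ (star (DB w1) = d A1 ∧
       star (DB w0 + smul A1 w0 - smul A0 w1) = d A0 + wedge A1 A0) := by
  simp only [monopole_lhs_affine_expand, monopole_rhs_affine_expand d wedge (halt A1)]
  exact forall_smul_add_eq_smul_add_iff
end

section
/- If (w, A) with w = t²w₂ + t w₁ + w₀ and A = t²A₂ + tA₁ + A₀ (coefficients t-independent), then the generalized monopole equation *_B(D^B w + Ȧw − Aẇ) = dA + Ȧ∧A holds for all t if and only if the three projective monopole equations *_B(D^B w₂ + A₂w₁ − A₁w₂) = dA₂ + A₂∧A₁, *_B((1/2)D^B w₁ + A₂w₀ − A₀w₂) = (1/2)dA₁ + A₂∧A₀, and *_B(D^B w₀ + A₁w₀ − A₀w₁) = dA₀ + A₁∧A₀ hold. -/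
/-! Since `w` and `A` are quadratic in `t`, the cubic terms of `Ȧ w - A ẇ` cancel and, `∧` being
alternating, so do those of `Ȧ ∧ A`. The defect of the generalized monopole equation is therefore a
quadratic polynomial in `t` whose coefficients are the defects of the three projective equations
(the middle one doubled), and a quadratic polynomial vanishes identically on `ℝ` exactly when its
coefficients vanish. -/

theorem quadratic_smul_eq_zero_iff {K M : Type*} [Field K] [CharZero K] [AddCommGroup M]
    [Module K M] {x₂ x₁ x₀ : M} :
    (∀ t : K, t ^ 2 • x₂ + t • x₁ + x₀ = 0) ↔ x₂ = 0 ∧ x₁ = 0 ∧ x₀ = 0 := by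
  refine ⟨fun h => ?_, ?_⟩
  · have h₀ := h 0
    have h₁ := h 1
    have hm := h (-1)
    simp only [ne_eq, OfNat.ofNat_ne_zero, not_false_eq_true, zero_pow, zero_smul, zero_add,
      one_pow, one_smul] at h₀ h₁
    refine ⟨?_, ?_, h₀⟩
    · linear_combination (norm := module) (2⁻¹ : K) • h₁ + (2⁻¹ : K) • hm - h₀
    · linear_combination (norm := module) (2⁻¹ : K) • h₁ - (2⁻¹ : K) • hm
  · rintro ⟨rfl, rfl, rfl⟩ t
    simp

section QuadraticCurves

variable {K M P N : Type*} [CommRing K] [AddCommGroup M] [Module K M] [AddCommGroup P] [Module K P]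
  [AddCommGroup N] [Module K N]

theorem LinearMap.apply_deriv_sub_apply_deriv_of_quadratic (B : M →ₗ[K] P →ₗ[K] N)
    (a₂ a₁ a₀ : M) (p₂ p₁ p₀ : P) (t : K) :
    B ((2 * t) • a₂ + a₁) (t ^ 2 • p₂ + t • p₁ + p₀)
        - B (t ^ 2 • a₂ + t • a₁ + a₀) ((2 * t) • p₂ + p₁)
      = t ^ 2 • (B a₂ p₁ - B a₁ p₂) + t • (2 : K) • (B a₂ p₀ - B a₀ p₂)
        + (B a₁ p₀ - B a₀ p₁) := by
  simp only [map_add, map_smul, LinearMap.add_apply, LinearMap.smul_apply]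
  module

theorem LinearMap.IsAlt.apply_deriv_of_quadratic {B : M →ₗ[K] M →ₗ[K] N} (hB : B.IsAlt)
    (a₂ a₁ a₀ : M) (t : K) :
    B ((2 * t) • a₂ + a₁) (t ^ 2 • a₂ + t • a₁ + a₀)
      = t ^ 2 • B a₂ a₁ + t • (2 : K) • B a₂ a₀ + B a₁ a₀ := by
  simp only [map_add, map_smul, LinearMap.add_apply, LinearMap.smul_apply, hB.self_eq_zero,
    ← hB.neg a₂ a₁]
  module

end QuadraticCurves

/-- Theorem VI of the paper, abstract model of the monopole equations on a
3-dimensional Einstein-Weyl space `B`: for the projective (quadratic) ansatz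
`w = t² w₂ + t w₁ + w₀`, `A = t² A₂ + t A₁ + A₀` (coefficients time-independent, so
`ẇ = 2t w₂ + w₁` and `Ȧ = 2t A₂ + A₁`), the generalized monopole equation
`*_B(D^B w + Ȧ w - A ẇ) = dA + Ȧ ∧ A` holds for all `t` if and only if the three
projective monopole equations
`*_B(D^B w₂ + A₂ w₁ - A₁ w₂) = dA₂ + A₂ ∧ A₁`,
`*_B(½ D^B w₁ + A₂ w₀ - A₀ w₂) = ½ dA₁ + A₂ ∧ A₀`, and
`*_B(D^B w₀ + A₁ w₀ - A₀ w₁) = dA₀ + A₁ ∧ A₀` hold. -/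
theorem projective_monopole_equations
    (W Ω1 Ω2 : Type*) [AddCommGroup W] [Module ℝ W]
    [AddCommGroup Ω1] [Module ℝ Ω1] [AddCommGroup Ω2] [Module ℝ Ω2]
    (star : Ω1 →ₗ[ℝ] Ω2)
    (DB : W →ₗ[ℝ] Ω1)
    (d : Ω1 →ₗ[ℝ] Ω2)
    (smul : Ω1 →ₗ[ℝ] W →ₗ[ℝ] Ω1)
    (wedge : Ω1 →ₗ[ℝ] Ω1 →ₗ[ℝ] Ω2)
    (halt : ∀ a : Ω1, wedge a a = 0)
    (w0 w1 w2 : W) (A0 A1 A2 : Ω1) :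
    (∀ t : ℝ,
      star (DB (t ^ 2 • w2 + t • w1 + w0)
          + smul ((2 * t) • A2 + A1) (t ^ 2 • w2 + t • w1 + w0)
          - smul (t ^ 2 • A2 + t • A1 + A0) ((2 * t) • w2 + w1))
        = d (t ^ 2 • A2 + t • A1 + A0)
          + wedge ((2 * t) • A2 + A1) (t ^ 2 • A2 + t • A1 + A0))
    ↔ (star (DB w2 + smul A2 w1 - smul A1 w2) = d A2 + wedge A2 A1 ∧
       star ((2⁻¹ : ℝ) • DB w1 + smul A2 w0 - smul A0 w2)
          = (2⁻¹ : ℝ) • d A1 + wedge A2 A0 ∧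
       star (DB w0 + smul A1 w0 - smul A0 w1) = d A0 + wedge A1 A0) := by
  have defect_quadratic : ∀ t : ℝ,
      star (DB (t ^ 2 • w2 + t • w1 + w0)
          + smul ((2 * t) • A2 + A1) (t ^ 2 • w2 + t • w1 + w0)
          - smul (t ^ 2 • A2 + t • A1 + A0) ((2 * t) • w2 + w1))
        - (d (t ^ 2 • A2 + t • A1 + A0)
          + wedge ((2 * t) • A2 + A1) (t ^ 2 • A2 + t • A1 + A0))
      = t ^ 2 • (star (DB w2 + smul A2 w1 - smul A1 w2) - (d A2 + wedge A2 A1))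
        + t • (2 : ℝ) • (star ((2⁻¹ : ℝ) • DB w1 + smul A2 w0 - smul A0 w2)
          - ((2⁻¹ : ℝ) • d A1 + wedge A2 A0))
        + (star (DB w0 + smul A1 w0 - smul A0 w1) - (d A0 + wedge A1 A0)) := by
    intro t
    rw [add_sub_assoc, smul.apply_deriv_sub_apply_deriv_of_quadratic,
      LinearMap.IsAlt.apply_deriv_of_quadratic halt]
    simp only [map_add, map_sub, map_smul]
    module
  simp_rw [← sub_eq_zero (a := star _), defect_quadratic, quadratic_smul_eq_zero_iff,
    smul_eq_zero, two_ne_zero, false_or]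
end

section
/- The projective monopole equations are equivalent to the SL(2,ℝ) Bogomolny equation: setting w = [[w₁/2, w₀],[−w₂, −w₁/2]] and A = [[A₁/2, A₀],[−A₂, −A₁/2]] (sl(2,ℝ)-valued density and connection 1-form), the three projective monopole equations hold if and only if *_B(D^B w + [A, w]) = dA + A∧A. -/
/-!
Write `sl₂` matrices as `[[h, e], [-f, -h]]`. Both the bilinear commutator `[A, w]` and, for an
alternating `∧`, the square `A ∧ A` of two such matrices are again of this traceless shape, and so
are `D^B w` and `dA`. The `(1,1)` entry of the Bogomolny equation is therefore minus its `(0,0)`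
entry, and the remaining three entries are, after clearing the halves on the diagonal, the three
projective monopole equations.
-/

section Sl2Matrix

variable {M N : Type*} [AddCommGroup M] [AddCommGroup N]

def sl2Matrix (h e f : M) : Matrix (Fin 2) (Fin 2) M := !![h, e; -f, -h]

theorem sl2Matrix_add (h e f h' e' f' : M) :
    sl2Matrix h e f + sl2Matrix h' e' f' = sl2Matrix (h + h') (e + e') (f + f') := by
  ext i j
  fin_cases i <;> fin_cases j <;> simp [sl2Matrix, add_comm]

theorem sl2Matrix_map {F : Type*} [FunLike F M N] [AddMonoidHomClass F M N] (φ : F)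
    (h e f : M) : (sl2Matrix h e f).map φ = sl2Matrix (φ h) (φ e) (φ f) := by
  ext i j
  fin_cases i <;> fin_cases j <;> simp [sl2Matrix]

theorem sl2Matrix_inj {h e f h' e' f' : M} :
    sl2Matrix h e f = sl2Matrix h' e' f' ↔ h = h' ∧ e = e' ∧ f = f' := by
  refine ⟨fun H ↦ ⟨congrFun₂ H 0 0, congrFun₂ H 0 1, neg_inj.1 (congrFun₂ H 1 0)⟩, ?_⟩
  rintro ⟨rfl, rfl, rfl⟩
  rfl

end Sl2Matrix

section BilinearMatrixProducts

variable {R M N P : Type*} [CommSemiring R] [AddCommGroup M] [Module R M]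
  [AddCommGroup N] [Module R N] [AddCommGroup P] [Module R P]

def bilinMatMul {l m n : Type*} [Fintype m] (B : M →ₗ[R] N →ₗ[R] P) (A : Matrix l m M)
    (C : Matrix m n N) : Matrix l n P :=
  Matrix.of fun i j => ∑ k, B (A i k) (C k j)

def bilinMatBracket {n : Type*} [Fintype n] (B : M →ₗ[R] N →ₗ[R] P) (A : Matrix n n M)
    (w : Matrix n n N) : Matrix n n P :=
  Matrix.of fun i j => ∑ k, (B (A i k) (w k j) - B (A k j) (w i k))

theorem bilinMatBracket_sl2Matrix (B : M →ₗ[R] N →ₗ[R] P) (h e f : M) (h' e' f' : N) :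
    bilinMatBracket B (sl2Matrix h e f) (sl2Matrix h' e' f') =
      sl2Matrix (B f e' - B e f') ((2 : R) • (B h e' - B e h')) ((2 : R) • (B f h' - B h f')) := by
  ext i j
  fin_cases i <;> fin_cases j <;> simp [bilinMatBracket, sl2Matrix, two_smul] <;> abel

theorem bilinMatMul_sl2Matrix_self {B : M →ₗ[R] M →ₗ[R] P} (hB : B.IsAlt) (h e f : M) :
    bilinMatMul B (sl2Matrix h e f) (sl2Matrix h e f) =
      sl2Matrix (B f e) ((2 : R) • B h e) ((2 : R) • B f h) := by
  ext i j
  fin_cases i <;> fin_cases j <;>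
    simp [bilinMatMul, sl2Matrix, two_smul, hB.self_eq_zero, hB.neg]

end BilinearMatrixProducts

/-- abstract model on a 3-dimensional Einstein-Weyl space `B`: the projective
monopole equations are equivalent to the `SL(2,ℝ)` Einstein-Weyl Bogomolny equation.
Setting `w = [[w₁/2, w₀], [-w₂, -w₁/2]]` (an `sl(2,ℝ)`-valued density) and
`A = [[A₁/2, A₀], [-A₂, -A₁/2]]` (an `sl(2,ℝ)`-valued connection `1`-form), the three
projective monopole equations hold if and only if `*_B(D^B w + [A, w]) = dA + A ∧ A`
entrywise, where `[A,w]ᵢⱼ = ∑ₖ Aᵢₖ wₖⱼ - Aₖⱼ wᵢₖ` and `(A ∧ A)ᵢⱼ = ∑ₖ Aᵢₖ ∧ Aₖⱼ`. -/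
theorem projective_monopole_sl2_bogomolny
    (W Ω1 Ω2 : Type*) [AddCommGroup W] [Module ℝ W]
    [AddCommGroup Ω1] [Module ℝ Ω1] [AddCommGroup Ω2] [Module ℝ Ω2]
    (star : Ω1 →ₗ[ℝ] Ω2)
    (DB : W →ₗ[ℝ] Ω1)
    (d : Ω1 →ₗ[ℝ] Ω2)
    (smul : Ω1 →ₗ[ℝ] W →ₗ[ℝ] Ω1)
    (wedge : Ω1 →ₗ[ℝ] Ω1 →ₗ[ℝ] Ω2)
    (halt : ∀ a : Ω1, wedge a a = 0)
    (w0 w1 w2 : W) (A0 A1 A2 : Ω1)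
    (Wm : Matrix (Fin 2) (Fin 2) W)
    (hWm : Wm = !![(2⁻¹ : ℝ) • w1, w0; -w2, -((2⁻¹ : ℝ) • w1)])
    (Am : Matrix (Fin 2) (Fin 2) Ω1)
    (hAm : Am = !![(2⁻¹ : ℝ) • A1, A0; -A2, -((2⁻¹ : ℝ) • A1)]) :
    (star (DB w2 + smul A2 w1 - smul A1 w2) = d A2 + wedge A2 A1 ∧
     star ((2⁻¹ : ℝ) • DB w1 + smul A2 w0 - smul A0 w2)
        = (2⁻¹ : ℝ) • d A1 + wedge A2 A0 ∧
     star (DB w0 + smul A1 w0 - smul A0 w1) = d A0 + wedge A1 A0)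
    ↔ (∀ i j : Fin 2,
        star (DB (Wm i j) + ∑ k, (smul (Am i k) (Wm k j) - smul (Am k j) (Wm i k)))
          = d (Am i j) + ∑ k, wedge (Am i k) (Am k j)) := by
  refine Iff.trans ?_ (Matrix.ext_iff (M := (Wm.map DB + bilinMatBracket smul Am Wm).map star)
    (N := Am.map d + bilinMatMul wedge Am Am)).symm
  obtain rfl : Wm = sl2Matrix ((2⁻¹ : ℝ) • w1) w0 w2 := hWm
  obtain rfl : Am = sl2Matrix ((2⁻¹ : ℝ) • A1) A0 A2 := hAm
  rw [bilinMatBracket_sl2Matrix, bilinMatMul_sl2Matrix_self halt, sl2Matrix_map, sl2Matrix_add,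
    sl2Matrix_map, sl2Matrix_map, sl2Matrix_add, sl2Matrix_inj, and_rotate]
  simp only [map_smul, LinearMap.smul_apply, smul_sub, smul_smul,
    mul_inv_cancel₀ (two_ne_zero' ℝ), one_smul, add_sub_assoc]
end
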